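/- On the polynomial ring ℚ(v)[x_1,…,x_n] the operators ∇_i satisfy: ∇_i² = −(v + v^{−1})∇_i for all 1 ≤ i ≤ n−1; ∇_i ∇_j = ∇_j ∇_i whenever |i−j| ≥ 2; and ∇_i ∇_{i+1} ∇_i − ∇_{i+1} ∇_i ∇_{i+1} = ∇_i − ∇_{i+1} for 1 ≤ i ≤ n−2. Equivalently, the operators T_i := ∇_i + v satisfy the Hecke algebra relations (T_i − v)(T_i + v^{−1}) = 0 together with the braid and commutation relations. -/

import Mathlib

open scoped Classical

set_option maxHeartbeats 1000000
set_option synthInstance.maxHeartbeats 1000000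

noncomputable section

/-- The field ℚ(v) of rational functions. -/
abbrev F : Type := RatFunc ℚ

/-- The variable v. -/
def v : F := RatFunc.X

/-- The quantum integer [r] = (v^r - v^{-r})/(v - v^{-1}). -/
def qint (r : ℕ) : F := (v ^ r - v⁻¹ ^ r) / (v - v⁻¹)


/-- The variable x_p (1-based position p) in ℚ(v)[x_1,…,x_n]. -/
def xv (n p : ℕ) : MvPolynomial (Fin n) F :=
  if h : 1 ≤ p ∧ p ≤ n then MvPolynomial.X ⟨p - 1, by omega⟩ else 0

/-- Exchange of the variables x_i and x_{i+1} (1-based, 1 ≤ i ≤ n−1). -/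
def swapf (n i : ℕ) (f : MvPolynomial (Fin n) F) : MvPolynomial (Fin n) F :=
  if h : 1 ≤ i ∧ i < n then
    MvPolynomial.rename (Equiv.swap ⟨i - 1, by omega⟩ ⟨i, h.2⟩) f
  else f

/-- The divided difference ∂_i f = (f − s_i f)/(x_i − x_{i+1}). -/
def ddiff (n i : ℕ) (f : MvPolynomial (Fin n) F) : MvPolynomial (Fin n) F :=
  if h : ∃ g, f - swapf n i f = (xv n i - xv n (i + 1)) * g then h.choose else 0

/-- The operator ∇_i f = (v x_{i+1} − v⁻¹ x_i)·∂_i f. -/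
def nabla (n i : ℕ) (f : MvPolynomial (Fin n) F) : MvPolynomial (Fin n) F :=
  (MvPolynomial.C v * xv n (i + 1) - MvPolynomial.C v⁻¹ * xv n i) * ddiff n i f



/-- T_i = ∇_i + v. -/
def Tnab (n i : ℕ) (f : MvPolynomial (Fin n) F) : MvPolynomial (Fin n) F :=
  nabla n i f + v • f

/-!
Everything reduces to the nil-Hecke calculus of the divided differences `∂_{ab}`, characterised by
`(x_a - x_b) ∂_{ab} f = f - s_{ab} f`: the twisted Leibniz rule `∂(gh) = ∂g·h + s(g)·∂h`,
`∂² = 0`, commutation of far-apart `∂`'s, and the braid relation, which holds because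
`(x_a - x_b)(x_a - x_c)(x_b - x_c) ∂_{ab}∂_{bc}∂_{ab} f` is the alternating sum of `w f` over
`w ∈ S₃`. Writing `∇_{ab} = c_{ab} ∂_{ab}` with the linear form `c_{ab} = q x_b - q⁻¹ x_a`, the
Leibniz rule gives `∇_{ab}∇_{bc}∇_{ab} = ∇_{ab} + c_{ab} c_{ac} c_{bc} ∂_{ab}∂_{bc}∂_{ab}`, and
since `∇` is unchanged by reversing the pair and inverting `q`, the other braid word has the
same shape. The relations for `T = ∇ + q` are then formal.
-/

open MvPolynomial Equiv

namespace MvPolynomial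

section DivDiff

variable {σ R : Type*} [CommRing R]

theorem X_sub_X_ne_zero [IsDomain R] {a b : σ} (hab : a ≠ b) :
    (X a - X b : MvPolynomial σ R) ≠ 0 :=
  sub_ne_zero.2 (X_injective.ne hab)

variable [DecidableEq σ]

theorem rename_swap_rename_swap (a b : σ) (f : MvPolynomial σ R) :
    rename (swap a b) (rename (swap a b) f) = f := by
  rw [rename_rename, ← Perm.coe_mul, swap_mul_self, Perm.coe_one, rename_id_apply]

theorem rename_swap_braid {a b c : σ} (hab : a ≠ b) (hbc : b ≠ c) (hac : a ≠ c)
    (f : MvPolynomial σ R) :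
    rename (swap a b) (rename (swap b c) (rename (swap a b) f)) =
      rename (swap b c) (rename (swap a b) (rename (swap b c) f)) := by
  simp only [rename_rename, ← Perm.coe_mul, ← mul_assoc]
  rw [swap_mul_swap_mul_swap hab hac, swap_comm a b, swap_comm b c,
    swap_mul_swap_mul_swap hbc.symm hac.symm, swap_comm]

theorem X_sub_X_dvd_sub_rename_swap (a b : σ) (f : MvPolynomial σ R) :
    X a - X b ∣ f - rename (swap a b) f := by
  set I := Ideal.span {(X a - X b : MvPolynomial σ R)}
  have hX (j : σ) : X (swap a b j) - X j ∈ I := by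
    rw [Ideal.mem_span_singleton, swap_apply_def]
    split_ifs with hja hjb
    · exact ⟨-1, by rw [hja]; ring⟩
    · exact ⟨1, by rw [hjb]; ring⟩
    · simp
  have h : (Ideal.Quotient.mkₐ R I).comp (rename (swap a b)) = Ideal.Quotient.mkₐ R I := by
    ext j
    simpa [Ideal.Quotient.eq] using hX j
  rw [← Ideal.mem_span_singleton, ← Ideal.Quotient.eq]
  exact (DFunLike.congr_fun h f).symm

/-- Junk for `a = b`, where every polynomial is a valid quotient. -/
def divDiff (a b : σ) (f : MvPolynomial σ R) : MvPolynomial σ R :=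
  (X_sub_X_dvd_sub_rename_swap a b f).choose

theorem X_sub_X_mul_divDiff (a b : σ) (f : MvPolynomial σ R) :
    (X a - X b) * divDiff a b f = f - rename (swap a b) f :=
  (X_sub_X_dvd_sub_rename_swap a b f).choose_spec.symm

variable [IsDomain R] {a b : σ}

theorem divDiff_eq_of_mul (hab : a ≠ b) {f g : MvPolynomial σ R}
    (h : (X a - X b) * g = f - rename (swap a b) f) : divDiff a b f = g :=
  mul_left_cancel₀ (X_sub_X_ne_zero hab) ((X_sub_X_mul_divDiff a b f).trans h.symm)

theorem isLinearMap_divDiff (hab : a ≠ b) : IsLinearMap R (divDiff (R := R) a b) where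
  map_add f g := divDiff_eq_of_mul hab <| by
    rw [mul_add, X_sub_X_mul_divDiff, X_sub_X_mul_divDiff, map_add]; ring
  map_smul c f := divDiff_eq_of_mul hab <| by
    rw [mul_smul_comm, X_sub_X_mul_divDiff, map_smul, smul_sub]

theorem divDiff_mul (hab : a ≠ b) (f g : MvPolynomial σ R) :
    divDiff a b (f * g) = divDiff a b f * g + rename (swap a b) f * divDiff a b g :=
  divDiff_eq_of_mul hab <| by
    linear_combination g * X_sub_X_mul_divDiff a b f +
      rename (swap a b) f * X_sub_X_mul_divDiff a b g + map_mul (rename (swap a b)) f g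

theorem divDiff_of_rename_eq (hab : a ≠ b) {f : MvPolynomial σ R}
    (hf : rename (swap a b) f = f) : divDiff a b f = 0 :=
  divDiff_eq_of_mul hab (by rw [hf, sub_self, mul_zero])

theorem divDiff_mul_of_rename_eq (hab : a ≠ b) {g : MvPolynomial σ R}
    (hg : rename (swap a b) g = g) (f : MvPolynomial σ R) :
    divDiff a b (g * f) = g * divDiff a b f := by
  rw [divDiff_mul hab, divDiff_of_rename_eq hab hg, hg, zero_mul, zero_add]

theorem divDiff_C_mul (hab : a ≠ b) (c : R) (f : MvPolynomial σ R) :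
    divDiff a b (C c * f) = C c * divDiff a b f :=
  divDiff_mul_of_rename_eq hab (rename_C _ c) f

theorem rename_swap_divDiff (hab : a ≠ b) (f : MvPolynomial σ R) :
    rename (swap a b) (divDiff a b f) = divDiff a b f := by
  have h := congrArg (rename (swap a b)) (X_sub_X_mul_divDiff a b f)
  rw [map_mul, map_sub, map_sub, rename_X, rename_X, swap_apply_left, swap_apply_right,
    rename_swap_rename_swap] at h
  apply mul_left_cancel₀ (X_sub_X_ne_zero (R := R) hab)
  linear_combination -h - X_sub_X_mul_divDiff a b f

theorem divDiff_divDiff (hab : a ≠ b) (f : MvPolynomial σ R) :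
    divDiff a b (divDiff a b f) = 0 :=
  divDiff_of_rename_eq hab (rename_swap_divDiff hab f)

theorem divDiff_X (hab : a ≠ b) (j : σ) :
    divDiff a b (X j : MvPolynomial σ R) = if j = a then 1 else if j = b then -1 else 0 :=
  divDiff_eq_of_mul hab <| by
    rw [rename_X, swap_apply_def]
    split_ifs with hja hjb <;> subst_vars <;> ring

theorem divDiff_comm (hab : a ≠ b) (f : MvPolynomial σ R) :
    divDiff b a f = -divDiff a b f :=
  divDiff_eq_of_mul hab.symm <| by
    rw [swap_comm, ← X_sub_X_mul_divDiff]; ring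

theorem rename_divDiff (e : Perm σ) (hab : a ≠ b) (f : MvPolynomial σ R) :
    rename e (divDiff a b f) = divDiff (e a) (e b) (rename e f) := by
  refine (divDiff_eq_of_mul (e.injective.ne hab) ?_).symm
  have h := congrArg (rename e) (X_sub_X_mul_divDiff a b f)
  rw [map_mul, map_sub, map_sub, rename_X, rename_X] at h
  rw [h, swap_apply_apply, rename_rename, rename_rename]
  congr 3
  ext j
  simp

theorem divDiff_divDiff_comm {c d : σ} (hab : a ≠ b) (hcd : c ≠ d) (hac : a ≠ c) (had : a ≠ d)
    (hbc : b ≠ c) (hbd : b ≠ d) (f : MvPolynomial σ R) :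
    divDiff a b (divDiff c d f) = divDiff c d (divDiff a b f) := by
  have hX : rename (swap a b) (X c - X d : MvPolynomial σ R) = X c - X d := by
    simp [swap_apply_of_ne_of_ne hac.symm hbc.symm, swap_apply_of_ne_of_ne had.symm hbd.symm]
  have hs : rename (swap c d) (divDiff a b f) = divDiff a b (rename (swap c d) f) := by
    rw [rename_divDiff _ hab, swap_apply_of_ne_of_ne hac had, swap_apply_of_ne_of_ne hbc hbd]
  refine (divDiff_eq_of_mul hcd ?_).symm
  rw [← divDiff_mul_of_rename_eq hab hX, X_sub_X_mul_divDiff, (isLinearMap_divDiff hab).map_sub,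
    hs]

theorem mul_divDiff_divDiff_divDiff {c : σ} (hab : a ≠ b) (hbc : b ≠ c) (hac : a ≠ c)
    (f : MvPolynomial σ R) :
    (X a - X b) * (X a - X c) * (X b - X c) * divDiff a b (divDiff b c (divDiff a b f)) =
      f - rename (swap a b) f - rename (swap b c) f + rename (swap b c) (rename (swap a b) f) +
        rename (swap a b) (rename (swap b c) f) -
          rename (swap a b) (rename (swap b c) (rename (swap a b) f)) := by
  set s := rename (R := R) (swap a b)
  set t := rename (R := R) (swap b c)
  set u := divDiff a b f
  set w := divDiff b c u
  have hu := X_sub_X_mul_divDiff a b f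
  have hw := X_sub_X_mul_divDiff b c u
  have hA := X_sub_X_mul_divDiff a b w
  have hsu : s u = u := rename_swap_divDiff hab f
  have hsX : s (X c) = X c := by simp [s, swap_apply_of_ne_of_ne hac.symm hbc.symm]
  have htX : t (X a) = X a := by simp [t, swap_apply_of_ne_of_ne hab hac]
  have hs_hw := congrArg s hw
  have ht_hu := congrArg t hu
  have hst_hu := congrArg s ht_hu
  simp only [map_mul, map_sub, rename_X, swap_apply_left, swap_apply_right, hsu, hsX, htX,
    s, t] at hs_hw ht_hu hst_hu
  linear_combination (X a - X c) * (X b - X c) * hA + (X a - X c) * hw - (X b - X c) * hs_hw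
    - ht_hu + hst_hu + hu

theorem divDiff_braid {c : σ} (hab : a ≠ b) (hbc : b ≠ c) (hac : a ≠ c) (f : MvPolynomial σ R) :
    divDiff a b (divDiff b c (divDiff a b f)) = divDiff b c (divDiff a b (divDiff b c f)) := by
  have h₁ := mul_divDiff_divDiff_divDiff hab hbc hac f
  -- the right-hand side is the left-hand one for the reversed triple `(c, b, a)`
  have h₂ := mul_divDiff_divDiff_divDiff hbc.symm hab.symm hac.symm f
  simp only [divDiff_comm hbc, divDiff_comm hab, (isLinearMap_divDiff hab).map_neg,
    (isLinearMap_divDiff hbc).map_neg, swap_comm c b, swap_comm b a] at h₂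
  apply mul_left_cancel₀ (mul_ne_zero (mul_ne_zero (X_sub_X_ne_zero hab) (X_sub_X_ne_zero hac))
    (X_sub_X_ne_zero (R := R) hbc))
  linear_combination h₁ - h₂ - rename_swap_braid hab hbc hac f

end DivDiff

section Nabla

variable {σ K : Type*} [Field K]

def nablaCoeff (q : K) (a b : σ) : MvPolynomial σ K := C q * X b - C q⁻¹ * X a

theorem nablaCoeff_inv (q : K) (a b : σ) : nablaCoeff q⁻¹ b a = -nablaCoeff q a b := by
  rw [nablaCoeff, nablaCoeff, inv_inv]; ring

theorem rename_nablaCoeff (e : Perm σ) (q : K) (a b : σ) :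
    rename e (nablaCoeff q a b) = nablaCoeff q (e a) (e b) := by
  simp [nablaCoeff]

variable [DecidableEq σ] {a b c : σ}

def nablaOp (q : K) (a b : σ) (f : MvPolynomial σ K) : MvPolynomial σ K :=
  nablaCoeff q a b * divDiff a b f

theorem nablaOp_inv (hab : a ≠ b) (q : K) : nablaOp q⁻¹ b a = nablaOp q a b := by
  ext f : 1
  rw [nablaOp, nablaOp, nablaCoeff_inv, divDiff_comm hab]; ring

theorem divDiff_nablaCoeff (hab : a ≠ b) (q : K) (c d : σ) :
    divDiff a b (nablaCoeff q c d) = C q * divDiff a b (X d) - C q⁻¹ * divDiff a b (X c) := by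
  rw [nablaCoeff, (isLinearMap_divDiff hab).map_sub, divDiff_C_mul hab, divDiff_C_mul hab]

theorem isLinearMap_nablaOp (hab : a ≠ b) (q : K) : IsLinearMap K (nablaOp q a b) where
  map_add f g := by rw [nablaOp, (isLinearMap_divDiff hab).map_add, mul_add]; rfl
  map_smul r f := by rw [nablaOp, (isLinearMap_divDiff hab).map_smul, mul_smul_comm]; rfl

theorem nablaOp_nablaOp (hab : a ≠ b) (q : K) (f : MvPolynomial σ K) :
    nablaOp q a b (nablaOp q a b f) = -(q + q⁻¹) • nablaOp q a b f := by
  simp only [nablaOp]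
  rw [divDiff_mul hab, divDiff_divDiff hab, divDiff_nablaCoeff hab, divDiff_X hab, divDiff_X hab,
    smul_eq_C_mul]
  simp only [hab.symm, ↓reduceIte, map_neg, map_add]
  ring

theorem nablaOp_comm {d : σ} (hab : a ≠ b) (hcd : c ≠ d) (hac : a ≠ c) (had : a ≠ d)
    (hbc : b ≠ c) (hbd : b ≠ d) (q : K) (f : MvPolynomial σ K) :
    nablaOp q a b (nablaOp q c d f) = nablaOp q c d (nablaOp q a b f) := by
  have h₁ : rename (swap a b) (nablaCoeff q c d) = nablaCoeff q c d := by
    rw [rename_nablaCoeff, swap_apply_of_ne_of_ne hac.symm hbc.symm,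
      swap_apply_of_ne_of_ne had.symm hbd.symm]
  have h₂ : rename (swap c d) (nablaCoeff q a b) = nablaCoeff q a b := by
    rw [rename_nablaCoeff, swap_apply_of_ne_of_ne hac had, swap_apply_of_ne_of_ne hbc hbd]
  simp only [nablaOp, divDiff_mul_of_rename_eq hab h₁, divDiff_mul_of_rename_eq hcd h₂,
    divDiff_divDiff_comm hab hcd hac had hbc hbd]
  ring

theorem nablaOp_nablaOp_nablaOp {q : K} (hq : q ≠ 0) (hab : a ≠ b) (hbc : b ≠ c) (hac : a ≠ c)
    (f : MvPolynomial σ K) :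
    nablaOp q a b (nablaOp q b c (nablaOp q a b f)) = nablaOp q a b f +
      nablaCoeff q a b * nablaCoeff q a c * nablaCoeff q b c *
        divDiff a b (divDiff b c (divDiff a b f)) := by
  have hC : C q⁻¹ * C q = (1 : MvPolynomial σ K) := by rw [← C_mul, inv_mul_cancel₀ hq, C_1]
  have inner : divDiff b c (nablaCoeff q a b * divDiff a b f) =
      C q * divDiff a b f + nablaCoeff q a c * divDiff b c (divDiff a b f) := by
    rw [divDiff_mul hbc, divDiff_nablaCoeff hbc, rename_nablaCoeff, divDiff_X hbc, divDiff_X hbc,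
      swap_apply_of_ne_of_ne hab hac, swap_apply_left]
    simp only [hab, hac, ↓reduceIte]
    ring
  have outer : divDiff a b (nablaCoeff q b c *
        (C q * divDiff a b f + nablaCoeff q a c * divDiff b c (divDiff a b f))) =
      divDiff a b f + nablaCoeff q a c *
        (nablaCoeff q b c * divDiff a b (divDiff b c (divDiff a b f))) := by
    rw [divDiff_mul hab, divDiff_nablaCoeff hab, rename_nablaCoeff,
      (isLinearMap_divDiff hab).map_add, divDiff_C_mul hab, divDiff_divDiff hab, divDiff_mul hab,
      divDiff_nablaCoeff hab, rename_nablaCoeff, divDiff_X hab, divDiff_X hab, divDiff_X hab,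
      swap_apply_right, swap_apply_left, swap_apply_of_ne_of_ne hac.symm hbc.symm]
    simp only [hab.symm, hac.symm, hbc.symm, ↓reduceIte]
    linear_combination divDiff a b f * hC
  simp only [nablaOp, inner, outer]
  ring

theorem nablaOp_braid {q : K} (hq : q ≠ 0) (hab : a ≠ b) (hbc : b ≠ c) (hac : a ≠ c)
    (f : MvPolynomial σ K) :
    nablaOp q a b (nablaOp q b c (nablaOp q a b f)) -
        nablaOp q b c (nablaOp q a b (nablaOp q b c f)) =
      nablaOp q a b f - nablaOp q b c f := by
  -- by `nablaOp_inv`, the right-hand word is the left-hand one for `(c, b, a)` and `q⁻¹`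
  have h := nablaOp_nablaOp_nablaOp (inv_ne_zero hq) hbc.symm hab.symm hac.symm f
  simp only [nablaOp_inv hbc, nablaOp_inv hab, nablaCoeff_inv, divDiff_comm hbc, divDiff_comm hab,
    (isLinearMap_divDiff hab).map_neg, (isLinearMap_divDiff hbc).map_neg] at h
  rw [nablaOp_nablaOp_nablaOp hq hab hbc hac, h, divDiff_braid hab hbc hac]
  ring

end Nabla

end MvPolynomial

section Hecke

variable {K M : Type*} [Field K] [AddCommGroup M] [Module K M] {q : K} {N N' T T' : M → M}

theorem hecke_quadratic (hq : q ≠ 0) (hN : IsLinearMap K N)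
    (hNN : ∀ f, N (N f) = -(q + q⁻¹) • N f) (hT : ∀ f, T f = N f + q • f) (f : M) :
    T (T f) - (q - q⁻¹) • T f - f = 0 := by
  simp only [hT, hN.map_add, hN.map_smul, hNN]
  linear_combination (norm := module) (mul_inv_cancel₀ hq) • f

theorem hecke_braid (hq : q ≠ 0) (hN : IsLinearMap K N) (hN' : IsLinearMap K N')
    (hNN : ∀ f, N (N f) = -(q + q⁻¹) • N f) (hNN' : ∀ f, N' (N' f) = -(q + q⁻¹) • N' f)
    (hbraid : ∀ f, N (N' (N f)) - N' (N (N' f)) = N f - N' f)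
    (hT : ∀ f, T f = N f + q • f) (hT' : ∀ f, T' f = N' f + q • f) (f : M) :
    T (T' (T f)) = T' (T (T' f)) := by
  simp only [hT, hT', hN.map_add, hN.map_smul, hN'.map_add, hN'.map_smul, hNN, hNN']
  linear_combination (norm := module) hbraid f - (mul_inv_cancel₀ hq) • (N f - N' f)

theorem hecke_comm (hN : IsLinearMap K N) (hN' : IsLinearMap K N')
    (hcomm : ∀ f, N (N' f) = N' (N f))
    (hT : ∀ f, T f = N f + q • f) (hT' : ∀ f, T' f = N' f + q • f) (f : M) :
    T (T' f) = T' (T f) := by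
  simp only [hT, hT', hN.map_add, hN.map_smul, hN'.map_add, hN'.map_smul, hcomm]
  module

end Hecke

section Bridge

variable {n i : ℕ}

theorem xv_eq_X (a : Fin n) (ha : (a : ℕ) + 1 = i) : xv n i = X a := by
  rw [xv, dif_pos (by omega)]
  congr
  omega

theorem swapf_eq_rename (a b : Fin n) (ha : (a : ℕ) + 1 = i) (hb : (b : ℕ) = i) :
    swapf n i = rename (swap a b) := by
  ext f : 1
  rw [swapf, dif_pos (by omega)]
  congr <;> omega

theorem ddiff_eq_divDiff (a b : Fin n) (ha : (a : ℕ) + 1 = i) (hb : (b : ℕ) = i)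
    (f : MvPolynomial (Fin n) F) : ddiff n i f = divDiff a b f := by
  have hab : a ≠ b := Fin.ne_of_val_ne (by omega)
  simp only [ddiff, swapf_eq_rename a b ha hb, xv_eq_X a ha,
    xv_eq_X b (by omega : (b : ℕ) + 1 = i + 1)]
  have hex : ∃ g, f - rename (swap a b) f = (X a - X b) * g :=
    ⟨_, (X_sub_X_mul_divDiff a b f).symm⟩
  rw [dif_pos hex]
  exact (divDiff_eq_of_mul hab hex.choose_spec.symm).symm

theorem nabla_eq_nablaOp (a b : Fin n) (ha : (a : ℕ) + 1 = i) (hb : (b : ℕ) = i) :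
    nabla n i = nablaOp v a b := by
  ext f : 1
  rw [nabla, nablaOp, nablaCoeff, ddiff_eq_divDiff a b ha hb, xv_eq_X a ha,
    xv_eq_X b (by omega : (b : ℕ) + 1 = i + 1)]

theorem nabla_eq_nablaOp_mk (h₁ : 1 ≤ i) (h₂ : i < n) :
    nabla n i = nablaOp v (⟨i - 1, by omega⟩ : Fin n) ⟨i, h₂⟩ :=
  nabla_eq_nablaOp _ _ (by dsimp only; omega) rfl

theorem isLinearMap_nabla (h₁ : 1 ≤ i) (h₂ : i < n) : IsLinearMap F (nabla n i) :=
  nabla_eq_nablaOp_mk h₁ h₂ ▸ isLinearMap_nablaOp (Fin.ne_of_val_ne (by dsimp only; omega)) v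

theorem nabla_nabla (h₁ : 1 ≤ i) (h₂ : i < n) (f : MvPolynomial (Fin n) F) :
    nabla n i (nabla n i f) = -(v + v⁻¹) • nabla n i f := by
  rw [nabla_eq_nablaOp_mk h₁ h₂]
  exact nablaOp_nablaOp (Fin.ne_of_val_ne (by dsimp only; omega)) v f

theorem nabla_comm {j : ℕ} (hi₁ : 1 ≤ i) (hi₂ : i < n) (hj₁ : 1 ≤ j) (hj₂ : j < n)
    (hij : i + 2 ≤ j ∨ j + 2 ≤ i) (f : MvPolynomial (Fin n) F) :
    nabla n i (nabla n j f) = nabla n j (nabla n i f) := by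
  rw [nabla_eq_nablaOp_mk hi₁ hi₂, nabla_eq_nablaOp_mk hj₁ hj₂]
  exact nablaOp_comm (Fin.ne_of_val_ne (by dsimp only; omega))
    (Fin.ne_of_val_ne (by dsimp only; omega)) (Fin.ne_of_val_ne (by dsimp only; omega))
    (Fin.ne_of_val_ne (by dsimp only; omega)) (Fin.ne_of_val_ne (by dsimp only; omega))
    (Fin.ne_of_val_ne (by dsimp only; omega)) v f

theorem nabla_braid (h₁ : 1 ≤ i) (h₂ : i + 1 < n) (f : MvPolynomial (Fin n) F) :
    nabla n i (nabla n (i + 1) (nabla n i f)) - nabla n (i + 1) (nabla n i (nabla n (i + 1) f)) =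
      nabla n i f - nabla n (i + 1) f := by
  rw [nabla_eq_nablaOp_mk h₁ (by omega), nabla_eq_nablaOp ⟨i, by omega⟩ ⟨i + 1, h₂⟩ rfl rfl]
  exact nablaOp_braid RatFunc.X_ne_zero (Fin.ne_of_val_ne (by dsimp only; omega))
    (Fin.ne_of_val_ne (by dsimp only; omega)) (Fin.ne_of_val_ne (by dsimp only; omega)) f

end Bridge

/-- The operators ∇_i on ℚ(v)[x_1,…,x_n] satisfy
∇_i² = −(v+v⁻¹)∇_i, commutation for |i−j| ≥ 2, and
∇_i∇_(i+1)∇_i − ∇_(i+1)∇_i∇_(i+1) = ∇_i − ∇_(i+1); equivalently T_i := ∇_i + v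
satisfy the Hecke algebra relations. -/
theorem nabla_relations (n : ℕ) :
    (∀ i : ℕ, 1 ≤ i → i < n → ∀ f : MvPolynomial (Fin n) F,
      nabla n i (nabla n i f) = -(v + v⁻¹) • nabla n i f) ∧
    (∀ i j : ℕ, 1 ≤ i → i < n → 1 ≤ j → j < n → (i + 2 ≤ j ∨ j + 2 ≤ i) →
      ∀ f : MvPolynomial (Fin n) F, nabla n i (nabla n j f) = nabla n j (nabla n i f)) ∧
    (∀ i : ℕ, 1 ≤ i → i + 1 < n → ∀ f : MvPolynomial (Fin n) F,
      nabla n i (nabla n (i + 1) (nabla n i f)) -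
        nabla n (i + 1) (nabla n i (nabla n (i + 1) f)) =
          nabla n i f - nabla n (i + 1) f) ∧
    (∀ i : ℕ, 1 ≤ i → i < n → ∀ f : MvPolynomial (Fin n) F,
      Tnab n i (Tnab n i f) - (v - v⁻¹) • Tnab n i f - f = 0) ∧
    (∀ i : ℕ, 1 ≤ i → i + 1 < n → ∀ f : MvPolynomial (Fin n) F,
      Tnab n i (Tnab n (i + 1) (Tnab n i f)) = Tnab n (i + 1) (Tnab n i (Tnab n (i + 1) f))) ∧
    (∀ i j : ℕ, 1 ≤ i → i < n → 1 ≤ j → j < n → (i + 2 ≤ j ∨ j + 2 ≤ i) →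
      ∀ f : MvPolynomial (Fin n) F, Tnab n i (Tnab n j f) = Tnab n j (Tnab n i f)) := by
  have hv : v ≠ 0 := RatFunc.X_ne_zero
  refine ⟨fun i h₁ h₂ => nabla_nabla h₁ h₂, fun i j hi₁ hi₂ hj₁ hj₂ => nabla_comm hi₁ hi₂ hj₁ hj₂,
    fun i h₁ h₂ => nabla_braid h₁ h₂, fun i h₁ h₂ => ?_, fun i h₁ h₂ => ?_,
    fun i j hi₁ hi₂ hj₁ hj₂ hij => ?_⟩
  · exact hecke_quadratic hv (isLinearMap_nabla h₁ h₂) (nabla_nabla h₁ h₂) fun _ => rfl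
  · exact hecke_braid hv (isLinearMap_nabla h₁ (by omega)) (isLinearMap_nabla (by omega) h₂)
      (nabla_nabla h₁ (by omega)) (nabla_nabla (by omega) h₂) (nabla_braid h₁ h₂)
      (fun _ => rfl) fun _ => rfl
  · exact hecke_comm (isLinearMap_nabla hi₁ hi₂) (isLinearMap_nabla hj₁ hj₂)
      (nabla_comm hi₁ hi₂ hj₁ hj₂ hij) (fun _ => rfl) fun _ => rfl

end
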